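/- Every d-regular finite simple graph G with at least one edge has sum index S(G) ≥ 2d − 1. -/

import Mathlib

/-!
Let `f` be an injective labelling, `a` a vertex of minimal label and `b` one of maximal label.
The `d` sums `f a + f x` over the neighbours `x` of `a` are pairwise distinct and at most
`f a + f b`, while the `d` sums `f b + f y` over the neighbours `y` of `b` are pairwise distinct
and at least `f a + f b`. The two families share at most the value `f a + f b`, so together they
contain at least `2d - 1` edge sums.
-/

open SimpleGraph

/-- The sum index of a finite simple graph. -/
noncomputable def sumIndex {V : Type*} [Fintype V] (G : SimpleGraph V) : ℕ :=
  sInf {n | ∃ f : V → ℤ, Function.Injective f ∧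
    {s : ℤ | ∃ u v, G.Adj u v ∧ s = f u + f v}.ncard = n}

namespace SimpleGraph

variable {V α : Type*} {G : SimpleGraph V}

theorem edgeSums_finite [Finite V] [Add α] (f : V → α) :
    {s | ∃ u w, G.Adj u w ∧ s = f u + f w}.Finite :=
  (Set.finite_range fun p : V × V => f p.1 + f p.2).subset <| by
    rintro _ ⟨u, w, -, rfl⟩
    exact ⟨(u, w), rfl⟩

variable [Fintype V] [DecidableRel G.Adj] [AddCommMonoid α] [LinearOrder α]

variable (G) in
def neighborSums (f : V → α) (v : V) : Finset α :=
  (G.neighborFinset v).image (f v + f ·)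

theorem coe_neighborSums_subset_edgeSums (f : V → α) (v : V) :
    (G.neighborSums f v : Set α) ⊆ {s | ∃ u w, G.Adj u w ∧ s = f u + f w} := by
  intro s hs
  obtain ⟨w, hw, rfl⟩ := Finset.mem_image.mp hs
  exact ⟨v, w, (G.mem_neighborFinset v w).mp hw, rfl⟩

variable [IsOrderedCancelAddMonoid α]

theorem card_neighborSums {f : V → α} (hf : Function.Injective f) (v : V) :
    (G.neighborSums f v).card = G.degree v :=
  (Finset.card_image_of_injective _ ((add_right_injective (f v)).comp hf)).trans
    (G.card_neighborFinset_eq_degree v)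

theorem neighborSums_inter_subset_of_min_of_max {f : V → α} {a b : V}
    (ha : ∀ x, f a ≤ f x) (hb : ∀ x, f x ≤ f b) :
    G.neighborSums f a ∩ G.neighborSums f b ⊆ {f a + f b} := by
  intro s hs
  obtain ⟨⟨x, -, rfl⟩, ⟨y, -, hy⟩⟩ := And.imp Finset.mem_image.mp Finset.mem_image.mp
    (Finset.mem_inter.mp hs)
  refine Finset.mem_singleton.mpr (le_antisymm (add_le_add_right (hb x) _) ?_)
  calc f a + f b ≤ f y + f b := add_le_add_left (ha y) _
    _ = f a + f x := by rw [add_comm, hy]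

theorem two_mul_sub_one_le_ncard_edgeSums [Nonempty V] {d : ℕ} (hreg : G.IsRegularOfDegree d)
    {f : V → α} (hf : Function.Injective f) :
    2 * d - 1 ≤ {s | ∃ u w, G.Adj u w ∧ s = f u + f w}.ncard := by
  obtain ⟨a, ha⟩ := Finite.exists_min f
  obtain ⟨b, hb⟩ := Finite.exists_max f
  have hunion : (G.neighborSums f a ∪ G.neighborSums f b).card ≤
      {s | ∃ u w, G.Adj u w ∧ s = f u + f w}.ncard := by
    rw [← Set.ncard_coe_finset, Finset.coe_union]
    exact Set.ncard_le_ncard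
      (Set.union_subset (coe_neighborSums_subset_edgeSums f a)
        (coe_neighborSums_subset_edgeSums f b))
      (edgeSums_finite f)
  have hinter : (G.neighborSums f a ∩ G.neighborSums f b).card ≤ 1 :=
    (Finset.card_le_card (neighborSums_inter_subset_of_min_of_max ha hb)).trans
      (Finset.card_singleton _).le
  have hsum := Finset.card_union_add_card_inter (G.neighborSums f a) (G.neighborSums f b)
  rw [card_neighborSums hf, card_neighborSums hf, hreg a, hreg b] at hsum
  omega

end SimpleGraph

theorem stmt7 {V : Type*} [Fintype V] (G : SimpleGraph V) [DecidableRel G.Adj]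
    (d : ℕ) (hreg : G.IsRegularOfDegree d) (hedge : ∃ u v, G.Adj u v) :
    2 * d - 1 ≤ sumIndex G := by
  obtain ⟨u, -, -⟩ := hedge
  have : Nonempty V := ⟨u⟩
  have hlabelling : Function.Injective fun v => (Fintype.equivFin V v : ℤ) :=
    Nat.cast_injective.comp (Fin.val_injective.comp (Fintype.equivFin V).injective)
  refine le_csInf ⟨_, _, hlabelling, rfl⟩ ?_
  rintro n ⟨f, hf, rfl⟩
  exact two_mul_sub_one_le_ncard_edgeSums hreg hf
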